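/- Fix real numbers λ and λ₁ with 0 < λ < 1 < λ₁. Then there exists δ > 0 such that for every λ₂ with λ₁ < λ₂ < λ₁ + δ, the improper integral ξ₂(λ₁, λ₂) = ∫_{λ₁}^{λ₂} (t² − b²)/√((t² − λ²)(t² − 1)(t² − λ₁²)(λ₂² − t²)) dt is strictly positive, where b = √((α + √(α² − 4λλ₁λ₂))/2) and α = λ + λ₁ − λ₂ − λλ₁ + λλ₂ + λ₁λ₂. -/

import Mathlib

/-!
Factor the radicand as `G t * ((t - λ₁) * (λ₂ - t))` with `G` positive and increasing on
`[λ₁, λ₂]`, and let `m` be the midpoint. Against the arcsine weight `1 / √((t - λ₁) (λ₂ - t))`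
the function `t - m` integrates to zero, so in `t² - b² ≥ 2m (t - m) + (m² - b²)` only the
constant `m² - b²` survives. As `λ₂ ↓ λ₁` this constant is of order `λ₂ - λ₁` (a tangent-line
bound on the square root of the discriminant), while the variation of `1 / √G` over `[λ₁, λ₂]`
tends to zero, so it dominates the error made by freezing `1 / √G`.
-/

open MeasureTheory Set Real Filter Topology

section ArcsineWeight

variable {a b : ℝ}

lemma hasDerivAt_arcsin_affine (hab : a < b) {t : ℝ} (ht : t ∈ Ioo a b) :
    HasDerivAt (fun t => arcsin ((2 * t - a - b) / (b - a))) (√((t - a) * (b - t)))⁻¹ t := by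
  have hba : 0 < b - a := by linarith
  have hu : 1 - ((2 * t - a - b) / (b - a)) ^ 2 = (2 * √((t - a) * (b - t)) / (b - a)) ^ 2 := by
    rw [div_pow, div_pow, mul_pow, sq_sqrt (by nlinarith [ht.1, ht.2])]
    field_simp
    ring
  have h1 : (2 * t - a - b) / (b - a) ≠ -1 := by
    rw [Ne, div_eq_iff hba.ne']; linarith [ht.1]
  have h2 : (2 * t - a - b) / (b - a) ≠ 1 := by
    rw [Ne, div_eq_iff hba.ne']; linarith [ht.2]
  refine ((hasDerivAt_arcsin h1 h2).comp t
    ((((hasDerivAt_id t).const_mul 2).sub_const a).sub_const b |>.div_const (b - a))).congr_deriv ?_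
  rw [hu, sqrt_sq (by positivity)]
  field_simp

lemma intervalIntegrable_inv_sqrt_mul_sub (hab : a < b) :
    IntervalIntegrable (fun t => (√((t - a) * (b - t)))⁻¹) volume a b :=
  (intervalIntegrable_iff_integrableOn_Ioc_of_le hab.le).2 <|
    intervalIntegral.integrableOn_deriv_of_nonneg (by fun_prop)
      (fun _ ht => hasDerivAt_arcsin_affine hab ht) (fun _ _ => by positivity)

lemma integral_inv_sqrt_mul_sub (hab : a < b) :
    ∫ t in a..b, (√((t - a) * (b - t)))⁻¹ = π := by
  rw [intervalIntegral.integral_eq_sub_of_hasDerivAt_of_le hab.le (by fun_prop)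
    (fun _ ht => hasDerivAt_arcsin_affine hab ht) (intervalIntegrable_inv_sqrt_mul_sub hab)]
  have hba : b - a ≠ 0 := by linarith
  rw [show (2 * b - a - b) / (b - a) = 1 by field_simp; ring,
    show (2 * a - a - b) / (b - a) = -1 by field_simp; ring, arcsin_one, arcsin_neg_one]
  ring

lemma IntervalIntegrable.of_abs_le_mul_inv_sqrt {f : ℝ → ℝ} {C : ℝ} (hab : a < b)
    (hf : Measurable f) (hfC : ∀ t ∈ Ioo a b, |f t| ≤ C * (√((t - a) * (b - t)))⁻¹) :
    IntervalIntegrable f volume a b := by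
  rw [intervalIntegrable_iff_integrableOn_Ioo_of_le hab.le]
  refine Integrable.mono' (((intervalIntegrable_inv_sqrt_mul_sub hab).const_mul C).1.mono_set
    Ioo_subset_Ioc_self) hf.aestronglyMeasurable ?_
  exact (ae_restrict_iff' measurableSet_Ioo).2 (.of_forall hfC)

lemma integral_sub_midpoint_div_sqrt_eq_zero :
    ∫ t in a..b, (t - (a + b) / 2) / √((t - a) * (b - t)) = 0 := by
  set u : ℝ → ℝ := fun t => (t - (a + b) / 2) / √((t - a) * (b - t))
  have hodd : ∀ t, u (a + b - t) = -u t := fun t => by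
    simp only [u]
    rw [show (a + b - t - a) * (b - (a + b - t)) = (t - a) * (b - t) by ring, ← neg_div]
    ring_nf
  have h := intervalIntegral.integral_comp_sub_left u (a + b) (a := a) (b := b)
  simp only [hodd, intervalIntegral.integral_neg, add_sub_cancel_right, add_sub_cancel_left] at h
  linarith

lemma intervalIntegrable_sub_midpoint_div_sqrt (hab : a < b) :
    IntervalIntegrable (fun t => (t - (a + b) / 2) / √((t - a) * (b - t))) volume a b := by
  refine .of_abs_le_mul_inv_sqrt (C := b - a) hab (by fun_prop) fun t ht => ?_
  rw [abs_div, abs_of_nonneg (sqrt_nonneg _), div_eq_mul_inv]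
  gcongr
  rw [abs_le]; constructor <;> linarith [ht.1, ht.2]

lemma le_sq_sub_mul {t m b β h H₁ H₂ : ℝ} (ht : 0 ≤ t) (htb : t ≤ b) (hm : 0 ≤ m) (hmb : m ≤ b)
    (hβ : β ≤ m ^ 2) (hH₀ : 0 ≤ H₂) (hH₁ : h ≤ H₁) (hH₂ : H₂ ≤ h) :
    2 * m * H₁ * (t - m) + ((m ^ 2 - β) * H₂ - (b ^ 2 - m ^ 2) * (H₁ - H₂)) ≤ (t ^ 2 - β) * h := by
  have htb2 : t ^ 2 ≤ b ^ 2 := by gcongr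
  have hmb2 : m ^ 2 ≤ b ^ 2 := by gcongr
  have hcenter : 0 ≤ (t - m) ^ 2 * H₁ := by nlinarith [sq_nonneg (t - m)]
  have hβh : 0 ≤ (m ^ 2 - β) * (h - H₂) := mul_nonneg (by linarith) (by linarith)
  rcases le_total (t ^ 2) (m ^ 2) with htm | htm
  · have h1 : 0 ≤ (m ^ 2 - t ^ 2) * (H₁ - h) := mul_nonneg (by linarith) (by linarith)
    have h2 : 0 ≤ (b ^ 2 - m ^ 2) * (H₁ - H₂) := mul_nonneg (by linarith) (by linarith)
    nlinarith
  · have h1 : 0 ≤ (t ^ 2 - m ^ 2) * (h - H₂) := mul_nonneg (by linarith) (by linarith)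
    have h2 : 0 ≤ (b ^ 2 - t ^ 2) * (H₁ - H₂) := mul_nonneg (by linarith) (by linarith)
    nlinarith

theorem integral_sq_sub_div_sqrt_pos {G : ℝ → ℝ} {β : ℝ} (ha : 0 ≤ a) (hab : a < b)
    (hG : Continuous G) (hGa : 0 < G a) (hGmono : MonotoneOn G (Icc a b))
    (hβ : β ≤ ((a + b) / 2) ^ 2)
    (hκ : (b ^ 2 - ((a + b) / 2) ^ 2) * ((√(G a))⁻¹ - (√(G b))⁻¹)
      < (((a + b) / 2) ^ 2 - β) * (√(G b))⁻¹) :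
    0 < ∫ t in a..b, (t ^ 2 - β) / √(G t * ((t - a) * (b - t))) := by
  set m := (a + b) / 2
  set H₁ := (√(G a))⁻¹
  set H₂ := (√(G b))⁻¹
  set κ := (m ^ 2 - β) * H₂ - (b ^ 2 - m ^ 2) * (H₁ - H₂)
  have ham : a ≤ m := show a ≤ (a + b) / 2 by linarith
  have hmb : m ≤ b := show (a + b) / 2 ≤ b by linarith
  have hH : ∀ t ∈ Ioo a b, 0 < G t ∧ H₂ ≤ (√(G t))⁻¹ ∧ (√(G t))⁻¹ ≤ H₁ := fun t ht => by
    have hGat := hGmono (left_mem_Icc.2 hab.le) (Ioo_subset_Icc_self ht) ht.1.le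
    have hGtb := hGmono (Ioo_subset_Icc_self ht) (right_mem_Icc.2 hab.le) ht.2.le
    refine ⟨hGa.trans_le hGat, inv_anti₀ ?_ (sqrt_le_sqrt hGtb), inv_anti₀ ?_ (sqrt_le_sqrt hGat)⟩
      <;> exact sqrt_pos.2 (by linarith)
  have hsplit : ∀ t ∈ Ioo a b, (t ^ 2 - β) / √(G t * ((t - a) * (b - t)))
      = (t ^ 2 - β) * (√(G t))⁻¹ * (√((t - a) * (b - t)))⁻¹ := fun t ht => by
    rw [sqrt_mul (hH t ht).1.le, div_eq_mul_inv, mul_inv, mul_assoc]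
  have hF :
      IntervalIntegrable (fun t => (t ^ 2 - β) / √(G t * ((t - a) * (b - t)))) volume a b := by
    refine .of_abs_le_mul_inv_sqrt (C := (b ^ 2 + |β|) * H₁) hab (by fun_prop) fun t ht => ?_
    obtain ⟨-, hH₂, hH₁⟩ := hH t ht
    have hH₂0 : 0 ≤ H₂ := by positivity
    rw [hsplit t ht, abs_mul, abs_mul, abs_of_nonneg (by positivity : 0 ≤ (√(G t))⁻¹),
      abs_of_nonneg (by positivity : 0 ≤ (√((t - a) * (b - t)))⁻¹)]
    gcongr
    have : t ^ 2 ≤ b ^ 2 := by gcongr <;> linarith [ht.1, ht.2]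
    refine (abs_sub _ _).trans ?_
    rw [abs_of_nonneg (sq_nonneg t)]
    linarith
  calc 0 < κ * π := mul_pos (by linarith) pi_pos
    _ = ∫ t in a..b, 2 * m * H₁ * ((t - m) / √((t - a) * (b - t)))
          + κ * (√((t - a) * (b - t)))⁻¹ := by
      rw [intervalIntegral.integral_add ((intervalIntegrable_sub_midpoint_div_sqrt hab).const_mul _)
        ((intervalIntegrable_inv_sqrt_mul_sub hab).const_mul _),
        intervalIntegral.integral_const_mul, intervalIntegral.integral_const_mul,
        integral_sub_midpoint_div_sqrt_eq_zero, integral_inv_sqrt_mul_sub hab]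
      ring
    _ ≤ _ := by
      refine intervalIntegral.integral_mono_on_of_le_Ioo hab.le
        (((intervalIntegrable_sub_midpoint_div_sqrt hab).const_mul _).add
          ((intervalIntegrable_inv_sqrt_mul_sub hab).const_mul _)) hF fun t ht => ?_
      obtain ⟨-, hH₂, hH₁⟩ := hH t ht
      rw [hsplit t ht, div_eq_mul_inv, ← mul_assoc, ← add_mul]
      gcongr
      exact le_sq_sub_mul (by linarith [ht.1]) ht.2.le (by linarith) (by linarith) hβ
        (by positivity) hH₁ hH₂

end ArcsineWeight

noncomputable section

namespace Xi2

variable {l l1 l2 : ℝ}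

def alpha (l l1 l2 : ℝ) : ℝ := l + l1 - l2 - l * l1 + l * l2 + l1 * l2

def disc (l l1 l2 : ℝ) : ℝ := alpha l l1 l2 ^ 2 - 4 * l * l1 * l2

def bSq (l l1 l2 : ℝ) : ℝ := (alpha l l1 l2 + √(disc l l1 l2)) / 2

def xi2 (l l1 l2 : ℝ) : ℝ :=
  ∫ t in l1..l2, (t ^ 2 - bSq l l1 l2) /
    √((t ^ 2 - l ^ 2) * (t ^ 2 - 1) * (t ^ 2 - l1 ^ 2) * (l2 ^ 2 - t ^ 2))

def regularFactor (l l1 l2 t : ℝ) : ℝ := (t ^ 2 - l ^ 2) * (t ^ 2 - 1) * (t + l1) * (l2 + t)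

def gapRate (l l1 l2 : ℝ) : ℝ := 4 * l1 ^ 2 * (1 - l) + (l1 ^ 2 - l - (l + l1 - 1) ^ 2) * (l2 - l1)

lemma regularFactor_pos (h0 : 0 ≤ l) (h1 : l < 1) (h2 : 1 < l1) (hl2 : 0 ≤ l2) :
    0 < regularFactor l l1 l2 l1 := by
  have : 0 < l1 ^ 2 - l ^ 2 := by nlinarith
  have : 0 < l1 ^ 2 - 1 := by nlinarith
  unfold regularFactor
  have : 0 < l1 + l1 := by linarith
  have : 0 < l2 + l1 := by linarith
  positivity

lemma regularFactor_monotoneOn (h0 : 0 ≤ l) (h1 : l ≤ 1) (h2 : 1 ≤ l1) (hl2 : 0 ≤ l2) :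
    MonotoneOn (regularFactor l l1 l2) (Ici l1) := by
  intro s hs t ht hst
  simp only [mem_Ici] at hs ht
  unfold regularFactor
  have : 0 ≤ t ^ 2 - l ^ 2 := by nlinarith
  have : 0 ≤ t ^ 2 - 1 := by nlinarith
  gcongr <;> first | nlinarith | (apply_rules [mul_nonneg]; all_goals linarith)

lemma gapRate_mul_le (hD : 0 ≤ disc l l1 l2) :
    (l2 - l1) * gapRate l l1 l2 ≤ 4 * (l1 ^ 2 - l) * (((l1 + l2) / 2) ^ 2 - bSq l l1 l2) := by
  -- tangent-line bound for `√D` at `s = λ₁² - λ`, the value of `√D` at `λ₂ = λ₁`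
  have htangent := two_mul_le_add_sq (√(disc l l1 l2)) (l1 ^ 2 - l)
  rw [sq_sqrt hD] at htangent
  have hid : 4 * (l1 ^ 2 - l) * ((l1 + l2) / 2) ^ 2 - 2 * (l1 ^ 2 - l) * alpha l l1 l2
      - (disc l l1 l2 + (l1 ^ 2 - l) ^ 2) = (l2 - l1) * gapRate l l1 l2 := by
    unfold disc alpha gapRate; ring
  unfold bSq
  nlinarith

lemma eventually_disc_pos_gapRate_pos_and_lt (h0 : 0 < l) (h1 : l < 1) (h2 : 1 < l1) :
    ∀ᶠ l2 in 𝓝 l1, 0 < disc l l1 l2 ∧ 0 < gapRate l l1 l2 ∧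
      (3 * l2 + l1) * (l1 ^ 2 - l) *
          ((√(regularFactor l l1 l2 l1))⁻¹ - (√(regularFactor l l1 l2 l2))⁻¹)
        < gapRate l l1 l2 * (√(regularFactor l l1 l2 l2))⁻¹ := by
  have hG := sqrt_pos.2 (regularFactor_pos h0.le h1 h2 (by linarith : 0 ≤ l1))
  have hH₁ : ContinuousAt (fun l2 => (√(regularFactor l l1 l2 l1))⁻¹) l1 :=
    ((by unfold regularFactor; fun_prop : Continuous fun l2 => √(regularFactor l l1 l2 l1))
      |>.continuousAt).inv₀ hG.ne'
  have hH₂ : ContinuousAt (fun l2 => (√(regularFactor l l1 l2 l2))⁻¹) l1 :=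
    ((by unfold regularFactor; fun_prop : Continuous fun l2 => √(regularFactor l l1 l2 l2))
      |>.continuousAt).inv₀ hG.ne'
  have hr : ContinuousAt (gapRate l l1) l1 := by unfold gapRate; fun_prop
  have hD : ContinuousAt (disc l l1) l1 := by unfold disc alpha; fun_prop
  have hr0 : 0 < gapRate l l1 l1 := by
    unfold gapRate
    simpa using mul_pos (by positivity : 0 < 4 * l1 ^ 2) (by linarith : 0 < 1 - l)
  have hD0 : 0 < disc l l1 l1 := by
    have : 0 < l1 ^ 2 - l := by nlinarith
    have hval : disc l l1 l1 = (l1 ^ 2 - l) ^ 2 := by unfold disc alpha; ring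
    rw [hval]; positivity
  refine (continuousAt_const.eventually_lt hD hD0).and
    ((continuousAt_const.eventually_lt hr hr0).and
      (ContinuousAt.eventually_lt (by fun_prop) (hr.mul hH₂) ?_))
  simpa only [sub_self, mul_zero] using mul_pos hr0 (inv_pos.2 hG)

lemma xi2_pos (h0 : 0 < l) (h1 : l < 1) (h2 : 1 < l1) (hl2 : l1 < l2)
    (hD : 0 ≤ disc l l1 l2) (hr : 0 < gapRate l l1 l2)
    (hκ : (3 * l2 + l1) * (l1 ^ 2 - l) *
          ((√(regularFactor l l1 l2 l1))⁻¹ - (√(regularFactor l l1 l2 l2))⁻¹)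
        < gapRate l l1 l2 * (√(regularFactor l l1 l2 l2))⁻¹) :
    0 < xi2 l l1 l2 := by
  have hs : 0 < l1 ^ 2 - l := by nlinarith
  have hgap := gapRate_mul_le hD
  have hfactor : ∀ t, (t ^ 2 - l ^ 2) * (t ^ 2 - 1) * (t ^ 2 - l1 ^ 2) * (l2 ^ 2 - t ^ 2)
      = regularFactor l l1 l2 t * ((t - l1) * (l2 - t)) := fun t => by
    unfold regularFactor; ring
  unfold xi2
  simp_rw [hfactor]
  refine integral_sq_sub_div_sqrt_pos (by linarith) hl2 (by unfold regularFactor; fun_prop)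
    (regularFactor_pos h0.le h1 h2 (by linarith))
    ((regularFactor_monotoneOn h0.le h1.le h2.le (by linarith)).mono Icc_subset_Ici_self) ?_ ?_
  · nlinarith [mul_pos (sub_pos.2 hl2) hr]
  · refine lt_of_mul_lt_mul_left ?_ (by positivity : 0 ≤ 4 * (l1 ^ 2 - l))
    set H₁ := (√(regularFactor l l1 l2 l1))⁻¹
    set H₂ := (√(regularFactor l l1 l2 l2))⁻¹
    calc 4 * (l1 ^ 2 - l) * ((l2 ^ 2 - ((l1 + l2) / 2) ^ 2) * (H₁ - H₂))
        = (l2 - l1) * ((3 * l2 + l1) * (l1 ^ 2 - l) * (H₁ - H₂)) := by ring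
      _ < (l2 - l1) * (gapRate l l1 l2 * H₂) := mul_lt_mul_of_pos_left hκ (sub_pos.2 hl2)
      _ = (l2 - l1) * gapRate l l1 l2 * H₂ := by ring
      _ ≤ 4 * (l1 ^ 2 - l) * (((l1 + l2) / 2) ^ 2 - bSq l l1 l2) * H₂ := by gcongr
      _ = _ := by ring

end Xi2

end

theorem stmt_16 (l l1 : ℝ) (h0 : 0 < l) (h1 : l < 1) (h2 : 1 < l1) :
    ∃ δ > (0 : ℝ), ∀ l2 : ℝ, l1 < l2 → l2 < l1 + δ →
      0 < ∫ t in l1..l2,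
          (t ^ 2 -
              (l + l1 - l2 - l * l1 + l * l2 + l1 * l2 +
                  Real.sqrt ((l + l1 - l2 - l * l1 + l * l2 + l1 * l2) ^ 2 - 4 * l * l1 * l2)) /
                2) /
            Real.sqrt ((t ^ 2 - l ^ 2) * (t ^ 2 - 1) * (t ^ 2 - l1 ^ 2) * (l2 ^ 2 - t ^ 2)) := by
  have hev : ∀ᶠ l2 in 𝓝[>] l1, 0 < Xi2.xi2 l l1 l2 := by
    filter_upwards [self_mem_nhdsWithin,
      nhdsWithin_le_nhds (Xi2.eventually_disc_pos_gapRate_pos_and_lt h0 h1 h2)]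
      with l2 hl2 ⟨hD, hr, hκ⟩ using Xi2.xi2_pos h0 h1 h2 hl2 hD.le hr hκ
  obtain ⟨u, hu, hsub⟩ := mem_nhdsGT_iff_exists_Ioo_subset.1 hev
  exact ⟨u - l1, sub_pos.2 hu, fun l2 hl2 hl2u => hsub ⟨hl2, by linarith⟩⟩
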